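/- Let ρ be a density operator on a finite-dimensional Hilbert space and (Π, I−Π) a two-outcome projective measurement with tr(Πρ) ≥ 1 − ε. Let ρ' = ΠρΠ/tr(Πρ). Then the trace distance δ(ρ, ρ') = (1/2)·tr|ρ − ρ'| is at most 2√ε. -/

import Mathlib

open ComplexOrder
noncomputable section

/-- The trace norm `tr|A| = tr √(AᴴA)` of a matrix. -/
def psdSqrtOld {n : ℕ} {A : Matrix (Fin n) (Fin n) ℂ} (hA : A.PosSemidef) :
    Matrix (Fin n) (Fin n) ℂ :=
  (hA.1.eigenvectorUnitary : Matrix (Fin n) (Fin n) ℂ) *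
    Matrix.diagonal ((↑) ∘ (√·) ∘ hA.1.eigenvalues) *
    (star hA.1.eigenvectorUnitary : Matrix (Fin n) (Fin n) ℂ)

def traceNormM {d : ℕ} (A : Matrix (Fin d) (Fin d) ℂ) : ℝ :=
  ((psdSqrtOld (Matrix.posSemidef_conjTranspose_mul_self A)).trace).re

/-- The trace distance `δ(ρ, σ) = (1/2)·tr|ρ - σ|`. -/
def traceDist {d : ℕ} (ρ σ : Matrix (Fin d) (Fin d) ℂ) : ℝ :=
  (1 / 2) * traceNormM (ρ - σ)

end

/-!
Put `M = ρ - ρ'`. As `M` is Hermitian with trace zero, `δ(ρ, ρ') = tr M⁺ = tr (Q M)` for the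
spectral projection `Q` of `M` onto its positive eigenspace. Since `tr (PρP) = tr (Pρ) ≤ 1`,
replacing `ρ' = PρP / tr (Pρ)` by `PρP` can only increase `tr (Q M)`, and
`tr (Q (ρ - PρP)) = tr (Q (1 - P) ρ) + tr (Q P ρ (1 - P))`. The Cauchy–Schwarz inequality for the
`ρ`-weighted inner product `⟪A, B⟫ = tr (B ρ Aᴴ)` bounds each of these two terms by
`√(tr ((1 - P) ρ)) ≤ √ε`.
-/

open Matrix
open scoped MatrixOrder

lemma psdSqrtOld_eq_sqrt {d : ℕ} {A : Matrix (Fin d) (Fin d) ℂ} (hA : A.PosSemidef) :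
    psdSqrtOld hA = CFC.sqrt A := by
  rw [CFC.sqrt_eq_cfc, cfc_nnreal_eq_real _ A, hA.1.cfc_eq]
  simp only [IsHermitian.cfc, Unitary.conjStarAlgAut_apply, psdSqrtOld]
  congr 3
  funext i
  simp [max_eq_left (hA.eigenvalues_nonneg i)]

lemma traceNormM_eq_re_trace_abs {d : ℕ} (A : Matrix (Fin d) (Fin d) ℂ) :
    traceNormM A = (CFC.abs A).trace.re := by
  rw [traceNormM, psdSqrtOld_eq_sqrt]
  rfl

lemma traceNormM_eq_two_mul_re_trace_posPart {d : ℕ} {A : Matrix (Fin d) (Fin d) ℂ}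
    (hA : A.IsHermitian) (htr : A.trace = 0) : traceNormM A = 2 * (A⁺).trace.re := by
  have h := congr_arg trace (CFC.abs_add_self A hA)
  rw [trace_add, htr, add_zero, trace_smul] at h
  rw [traceNormM_eq_re_trace_abs, h, two_nsmul, Complex.add_re, two_mul]

namespace Matrix

variable {𝕜 n : Type*} [RCLike 𝕜] [Fintype n]

lemma exists_isStarProjection_posPart_eq_mul [DecidableEq n] {A : Matrix n n 𝕜}
    (hA : A.IsHermitian) : ∃ Q : Matrix n n 𝕜, IsStarProjection Q ∧ A⁺ = Q * A := by
  set f : ℝ → ℝ := fun x => if 0 < x then 1 else 0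
  have hf : ContinuousOn f (spectrum ℝ A) := A.finite_real_spectrum.continuousOn f
  have hA' : IsSelfAdjoint A := hA
  refine ⟨cfc f A, ⟨?_, cfc_predicate f A⟩, ?_⟩
  · rw [IsIdempotentElem, ← cfc_mul f f A]
    refine cfc_congr fun x _ => ?_
    simp only [f]
    split_ifs <;> simp
  · have hQA : cfc f A * A = cfc (fun x => f x * x) A := by
      rw [cfc_mul f (fun x => x) A, cfc_id' ℝ A]
    rw [hQA, CFC.posPart_def, cfcₙ_eq_cfc]
    refine cfc_congr fun x _ => ?_
    simp only [f]
    split_ifs with h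
    · simp [h.le]
    · simp [not_lt.mp h]

namespace IsStarProjection

variable {Q X : Matrix n n 𝕜}

lemma trace_mul_mul_self (hQ : IsStarProjection Q) (X : Matrix n n 𝕜) :
    (Q * X * Q).trace = (Q * X).trace := by
  rw [trace_mul_comm, ← mul_assoc, hQ.isIdempotentElem.eq]

lemma trace_mul_nonneg (hQ : IsStarProjection Q) (hX : X.PosSemidef) : 0 ≤ (Q * X).trace := by
  rw [← hQ.trace_mul_mul_self]
  have h := hX.mul_mul_conjTranspose_same Q
  rw [← star_eq_conjTranspose, hQ.isSelfAdjoint.star_eq] at h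
  exact h.trace_nonneg

lemma re_trace_mul_le [DecidableEq n] (hQ : IsStarProjection Q) (hX : X.PosSemidef) :
    RCLike.re (Q * X).trace ≤ RCLike.re X.trace := by
  have h := RCLike.nonneg_iff.mp (hQ.one_sub.trace_mul_nonneg hX)
  rw [sub_mul, one_mul, trace_sub, map_sub] at h
  linarith [h.1]

lemma re_trace_mul_sub_smul_le (hQ : IsStarProjection Q) (hX : X.PosSemidef)
    (Y : Matrix n n 𝕜) {c : ℝ} (hc : 1 ≤ c) :
    RCLike.re (Q * (Y - (c : 𝕜) • X)).trace ≤ RCLike.re (Q * (Y - X)).trace := by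
  have hQX := (RCLike.nonneg_iff.mp (hQ.trace_mul_nonneg hX)).1
  have e : (Q * (Y - (c : 𝕜) • X)).trace =
      (Q * (Y - X)).trace - ((c - 1 : ℝ) : 𝕜) * (Q * X).trace := by
    simp only [mul_sub, mul_smul_comm, trace_sub, trace_smul, smul_eq_mul]
    push_cast
    ring
  rw [e, map_sub, RCLike.re_ofReal_mul]
  nlinarith

end IsStarProjection

lemma re_trace_mul_mul_conjTranspose_le {ρ : Matrix n n 𝕜} (hρ : ρ.PosSemidef)
    (A B : Matrix n n 𝕜) :
    RCLike.re (A * ρ * Bᴴ).trace ≤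
      √(RCLike.re (A * ρ * Aᴴ).trace) * √(RCLike.re (B * ρ * Bᴴ).trace) := by
  let := ρ.toMatrixSeminormedAddCommGroup hρ
  let := ρ.toMatrixInnerProductSpace hρ
  rw [mul_comm]
  exact re_inner_le_norm (𝕜 := 𝕜) B A

lemma re_trace_mul_sub_mul_mul_le [DecidableEq n] {ρ P Q : Matrix n n ℂ} (hρ : ρ.PosSemidef)
    (htr : ρ.trace = 1) (hP : IsStarProjection P) (hQ : IsStarProjection Q) :
    (Q * (ρ - P * ρ * P)).trace.re ≤ 2 * √(1 - (P * ρ).trace.re) := by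
  have hPH : Pᴴ = P := hP.isSelfAdjoint.star_eq
  have hQH : Qᴴ = Q := hQ.isSelfAdjoint.star_eq
  have hPcH : (1 - P)ᴴ = 1 - P := hP.one_sub.isSelfAdjoint.star_eq
  have hsplit : (Q * (ρ - P * ρ * P)).trace =
      ((1 - P) * ρ * Qᴴ).trace + (Q * P * ρ * (1 - P)ᴴ).trace := by
    rw [hQH, hPcH, trace_mul_comm _ Q, ← trace_add]
    congr 1
    noncomm_ring
  have hPc : ((1 - P) * ρ * (1 - P)ᴴ).trace.re = 1 - (P * ρ).trace.re := by
    rw [hPcH, hP.one_sub.trace_mul_mul_self, sub_mul, one_mul, trace_sub, htr,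
      Complex.sub_re, Complex.one_re]
  have hQρ : (Q * ρ * Qᴴ).trace.re ≤ 1 := by
    rw [hQH, hQ.trace_mul_mul_self]
    simpa [htr] using hQ.re_trace_mul_le hρ
  have hQPρ : (Q * P * ρ * (Q * P)ᴴ).trace.re ≤ 1 := by
    have hPρP := hρ.mul_mul_conjTranspose_same P
    rw [hPH] at hPρP
    have e : Q * P * ρ * (Q * P)ᴴ = Q * (P * ρ * P) * Q := by
      rw [conjTranspose_mul, hPH, hQH]
      noncomm_ring
    rw [e, hQ.trace_mul_mul_self]
    calc (Q * (P * ρ * P)).trace.re ≤ (P * ρ * P).trace.re := hQ.re_trace_mul_le hPρP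
      _ = (P * ρ).trace.re := by rw [hP.trace_mul_mul_self]
      _ ≤ 1 := by simpa [htr] using hP.re_trace_mul_le hρ
  have h1 := re_trace_mul_mul_conjTranspose_le hρ (1 - P) Q
  have h2 := re_trace_mul_mul_conjTranspose_le hρ (Q * P) (1 - P)
  simp only [RCLike.re_to_complex, hPc] at h1 h2
  rw [hsplit, Complex.add_re, two_mul]
  gcongr
  · exact h1.trans (mul_le_of_le_one_right (Real.sqrt_nonneg _) (Real.sqrt_le_one.mpr hQρ))
  · exact h2.trans (mul_le_of_le_one_left (Real.sqrt_nonneg _) (Real.sqrt_le_one.mpr hQPρ))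

end Matrix

theorem stmt_19_general (d : ℕ) (ρ P : Matrix (Fin d) (Fin d) ℂ) (ε : ℝ)
    (hρ : ρ.PosSemidef) (htr : ρ.trace = 1)
    (hherm : P.IsHermitian) (hproj : P * P = P)
    (hε1 : ε < 1)
    (hmeas : 1 - ε ≤ ((P * ρ).trace).re) :
    traceDist ρ (((P * ρ).trace)⁻¹ • (P * ρ * P)) ≤ 2 * Real.sqrt ε := by
  have hP : IsStarProjection P := ⟨hproj, hherm⟩
  set q := (P * ρ).trace
  have hq_real : q = (q.re : ℂ) :=
    Complex.eq_re_of_ofReal_le (r := 0) (by simpa using hP.trace_mul_nonneg hρ)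
  have hq_pos : 0 < q.re := by linarith
  have hq_le : q.re ≤ 1 := by simpa [htr] using hP.re_trace_mul_le hρ
  have hq_inv : q⁻¹ = ((q.re⁻¹ : ℝ) : ℂ) := by rw [hq_real, Complex.ofReal_inv, Complex.ofReal_re]
  have hPρP : (P * ρ * P).PosSemidef := by
    simpa [hherm.eq] using hρ.mul_mul_conjTranspose_same P
  set M := ρ - q⁻¹ • (P * ρ * P) with hM_def
  have hM : M.IsHermitian :=
    hρ.isHermitian.sub (hPρP.isHermitian.smul (hq_inv ▸ Complex.conj_ofReal _))
  have hMtr : M.trace = 0 := by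
    rw [trace_sub, trace_smul, hP.trace_mul_mul_self, htr, smul_eq_mul,
      inv_mul_cancel₀ (by rw [hq_real]; exact_mod_cast hq_pos.ne'), sub_self]
  obtain ⟨Q, hQ, hMQ⟩ := exists_isStarProjection_posPart_eq_mul hM
  calc traceDist ρ (q⁻¹ • (P * ρ * P)) = (Q * M).trace.re := by
        rw [traceDist, traceNormM_eq_two_mul_re_trace_posPart hM hMtr, hMQ]
        ring
    _ ≤ (Q * (ρ - P * ρ * P)).trace.re := by
        rw [hM_def, hq_inv]
        exact hQ.re_trace_mul_sub_smul_le hPρP ρ ((one_le_inv₀ hq_pos).mpr hq_le)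
    _ ≤ 2 * √(1 - q.re) := re_trace_mul_sub_mul_mul_le hρ htr hP hQ
    _ ≤ 2 * √ε := by gcongr; linarith

/-- Gentle measurement (Winter 1999): if `ρ` is a density operator, `(P, I - P)` a
two-outcome projective measurement with `tr(Pρ) ≥ 1 - ε` (`ε ∈ [0,1)`), and
`ρ' = PρP/tr(Pρ)` the post-selected state, then `δ(ρ, ρ') ≤ 2√ε`. -/
theorem stmt_19 (d : ℕ) (ρ P : Matrix (Fin d) (Fin d) ℂ) (ε : ℝ)
    (hρ : ρ.PosSemidef) (htr : ρ.trace = 1)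
    (hherm : P.IsHermitian) (hproj : P * P = P)
    (hε : 0 ≤ ε) (hε1 : ε < 1)
    (hmeas : 1 - ε ≤ ((P * ρ).trace).re) :
    traceDist ρ (((P * ρ).trace)⁻¹ • (P * ρ * P)) ≤ 2 * Real.sqrt ε :=
  stmt_19_general d ρ P ε hρ htr hherm hproj hε1 hmeas
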